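/- arXiv:0708.2628 — 3 statements merged into one kernel-verified Lean document; each statement's English description precedes it below -/
import Mathlib

section
/- Let p be an odd prime and let D = diag(1, −1) ∈ GL(2, ZMod p). Then the map φ_p : M ↦ D M D⁻¹ (equivalently, (φ_p(M))_{ij} = (−1)^{i+j} M_{ij}) preserves the symplectic group Sp(2, ZMod p) and defines an automorphism of Sp(2, ZMod p). For w, w' ∈ (ZMod p)ˣ with w² ≠ −1 and w'² ≠ −1, the diagonal matrices diag(w, w⁻¹) and diag(w', w'⁻¹) are φ_p-conjugate in Sp(2, ZMod p) if and only if w' = w or w' = −w⁻¹. -/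
/-- Elements `x y : G` are `φ`-conjugate (twisted conjugate) if `y = g * x * (φ g)⁻¹`
for some `g : G`.  This is an equivalence relation; its classes are the Reidemeister
classes (twisted conjugacy classes) of `φ`. -/
def twistedConjSetoid {G : Type*} [Group G] (φ : G →* G) : Setoid G where
  r x y := ∃ g : G, y = g * x * (φ g)⁻¹
  iseqv := by
    refine ⟨fun x => ⟨1, by simp⟩, ?_, ?_⟩
    · rintro x y ⟨g, rfl⟩
      exact ⟨g⁻¹, by simp [mul_assoc]⟩
    · rintro x y z ⟨g, rfl⟩ ⟨h, rfl⟩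
      exact ⟨h * g, by simp [map_mul, mul_inv_rev, mul_assoc]⟩

/-- The Reidemeister number of an endomorphism `φ` of `G`: the cardinality of the set
of Reidemeister (twisted conjugacy) classes of `φ`. -/
noncomputable def ReidemeisterNumber {G : Type*} [Group G] (φ : G →* G) : Cardinal :=
  Cardinal.mk (Quotient (twistedConjSetoid φ))

set_option maxHeartbeats 1000000 in
set_option maxRecDepth 10000 in
open Matrix in
theorem sp2_zmod_twisted_conjugacy_of_diagonal
    (p : ℕ) [Fact p.Prime] (hp : p ≠ 2)
    (D : Matrix (Fin 1 ⊕ Fin 1) (Fin 1 ⊕ Fin 1) (ZMod p))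
    (hD : D = Matrix.diagonal (Sum.elim (fun _ => 1) (fun _ => -1))) :
    (∀ M ∈ Matrix.symplecticGroup (Fin 1) (ZMod p),
        D * M * D⁻¹ ∈ Matrix.symplecticGroup (Fin 1) (ZMod p)) ∧
    ∃ φ : Matrix.symplecticGroup (Fin 1) (ZMod p) ≃*
        Matrix.symplecticGroup (Fin 1) (ZMod p),
      (∀ M : Matrix.symplecticGroup (Fin 1) (ZMod p),
          (↑(φ M) : Matrix (Fin 1 ⊕ Fin 1) (Fin 1 ⊕ Fin 1) (ZMod p)) = D * (↑M : Matrix (Fin 1 ⊕ Fin 1) (Fin 1 ⊕ Fin 1) (ZMod p)) * D⁻¹) ∧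
      ∀ w w' : (ZMod p)ˣ, ((w : ZMod p)) ^ 2 ≠ -1 → ((w' : ZMod p)) ^ 2 ≠ -1 →
        ∀ W W' : Matrix.symplecticGroup (Fin 1) (ZMod p),
          (↑W : Matrix (Fin 1 ⊕ Fin 1) (Fin 1 ⊕ Fin 1) (ZMod p)) =
            Matrix.diagonal
              (Sum.elim (fun _ => (w : ZMod p)) (fun _ => ((w⁻¹ : (ZMod p)ˣ) : ZMod p))) →
          (↑W' : Matrix (Fin 1 ⊕ Fin 1) (Fin 1 ⊕ Fin 1) (ZMod p)) =
            Matrix.diagonal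
              (Sum.elim (fun _ => (w' : ZMod p)) (fun _ => ((w'⁻¹ : (ZMod p)ˣ) : ZMod p))) →
          ((twistedConjSetoid φ.toMonoidHom).r W W' ↔ (w' = w ∨ w' = -w⁻¹)) := by
  set Jp := Matrix.J (Fin 1) (ZMod p) with hJ
  have hDt : Dᵀ = D := by rw [hD, Matrix.diagonal_transpose]
  have hDD : D * D = 1 := by
    rw [hD, Matrix.diagonal_mul_diagonal]
    ext i j
    rcases i with i | i <;> rcases j with j | j <;>
      simp [Matrix.diagonal_apply, Matrix.one_apply, eq_iff_true_of_subsingleton]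
  have hDinv : D⁻¹ = D := Matrix.inv_eq_left_inv hDD
  have hDJD : D * Jp * D = -Jp := by
    rw [hD, hJ]
    ext i j
    rcases i with i | i <;> rcases j with j | j <;>
      simp [Matrix.J, Matrix.diagonal_mul, Matrix.mul_diagonal, Matrix.fromBlocks,
        eq_iff_true_of_subsingleton]
  have hpres : ∀ M ∈ Matrix.symplecticGroup (Fin 1) (ZMod p),
      D * M * D⁻¹ ∈ Matrix.symplecticGroup (Fin 1) (ZMod p) := by
    intro M hM
    rw [SymplecticGroup.mem_iff] at hM ⊢
    rw [hDinv]
    calc D * M * D * Jp * (D * M * D)ᵀ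
        = D * M * (D * Jp * D) * Mᵀ * D := by
          simp only [Matrix.transpose_mul, hDt, Matrix.mul_assoc]
      _ = -(D * (M * Jp * Mᵀ) * D) := by
          rw [hDJD]; simp only [Matrix.mul_neg, Matrix.neg_mul, Matrix.mul_assoc]
      _ = -(D * Jp * D) := by rw [hM]
      _ = Jp := by rw [hDJD, neg_neg]
  have hDDX : ∀ X : Matrix (Fin 1 ⊕ Fin 1) (Fin 1 ⊕ Fin 1) (ZMod p),
      D * (D * X) = X := fun X => by rw [← Matrix.mul_assoc, hDD, Matrix.one_mul]
  have hmem : ∀ M : Matrix.symplecticGroup (Fin 1) (ZMod p),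
      D * (↑M : Matrix (Fin 1 ⊕ Fin 1) (Fin 1 ⊕ Fin 1) (ZMod p)) * D ∈
        Matrix.symplecticGroup (Fin 1) (ZMod p) := by
    intro M
    have := hpres (↑M : Matrix (Fin 1 ⊕ Fin 1) (Fin 1 ⊕ Fin 1) (ZMod p)) M.2
    rwa [hDinv] at this
  let f : Matrix.symplecticGroup (Fin 1) (ZMod p) → Matrix.symplecticGroup (Fin 1) (ZMod p) :=
    fun M => ⟨D * (↑M : Matrix (Fin 1 ⊕ Fin 1) (Fin 1 ⊕ Fin 1) (ZMod p)) * D, hmem M⟩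
  have hfval : ∀ M : Matrix.symplecticGroup (Fin 1) (ZMod p),
      (↑(f M) : Matrix (Fin 1 ⊕ Fin 1) (Fin 1 ⊕ Fin 1) (ZMod p)) =
        D * (↑M : Matrix (Fin 1 ⊕ Fin 1) (Fin 1 ⊕ Fin 1) (ZMod p)) * D :=
    fun M => rfl
  have hf_mul : ∀ A B, f (A * B) = f A * f B := by
    intro A B
    apply Subtype.ext
    rw [Submonoid.coe_mul, hfval, hfval, hfval, Submonoid.coe_mul]
    simp only [Matrix.mul_assoc]
    rw [hDDX]
  have hf_invol : ∀ A, f (f A) = A := by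
    intro A
    apply Subtype.ext
    rw [hfval, hfval]
    simp only [Matrix.mul_assoc, hDD, Matrix.mul_one]
    exact hDDX _
  let φ : Matrix.symplecticGroup (Fin 1) (ZMod p) ≃*
      Matrix.symplecticGroup (Fin 1) (ZMod p) :=
    { toFun := f, invFun := f, left_inv := hf_invol, right_inv := hf_invol,
      map_mul' := hf_mul }
  have hφval : ∀ M : Matrix.symplecticGroup (Fin 1) (ZMod p),
      (↑(φ.toMonoidHom M) : Matrix (Fin 1 ⊕ Fin 1) (Fin 1 ⊕ Fin 1) (ZMod p)) =
        D * (↑M : Matrix (Fin 1 ⊕ Fin 1) (Fin 1 ⊕ Fin 1) (ZMod p)) * D :=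
    fun M => rfl
  refine ⟨hpres, φ, fun M => by rw [hDinv]; exact hfval M, ?_⟩
  intro w w' hw hw' W W' hW hW'
  constructor
  · rintro ⟨g, hg⟩
    have h1 : W' * φ.toMonoidHom g = g * W := by rw [hg]; group
    have hmat : (↑W' : Matrix (Fin 1 ⊕ Fin 1) (Fin 1 ⊕ Fin 1) (ZMod p)) *
        (D * (↑g : Matrix (Fin 1 ⊕ Fin 1) (Fin 1 ⊕ Fin 1) (ZMod p)) * D) = (↑g : Matrix (Fin 1 ⊕ Fin 1) (Fin 1 ⊕ Fin 1) (ZMod p)) * (↑W : Matrix (Fin 1 ⊕ Fin 1) (Fin 1 ⊕ Fin 1) (ZMod p)) := by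
      have h2 := congrArg (Subtype.val) h1
      rw [Submonoid.coe_mul, Submonoid.coe_mul, hφval] at h2
      exact h2
    rw [hW, hW', hD] at hmat
    set gm := (↑g : Matrix (Fin 1 ⊕ Fin 1) (Fin 1 ⊕ Fin 1) (ZMod p)) with hgm
    by_cases ha : gm (Sum.inl 0) (Sum.inl 0) = 0
    · by_cases hb : gm (Sum.inl 0) (Sum.inr 0) = 0
      · exfalso
        have hgi : gm * (↑(g⁻¹) : Matrix (Fin 1 ⊕ Fin 1) (Fin 1 ⊕ Fin 1) (ZMod p)) = 1 := by
          have h3 := congrArg (Subtype.val) (mul_inv_cancel g)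
          rwa [Submonoid.coe_mul] at h3
        have h4 := congrFun (congrFun hgi (Sum.inl 0)) (Sum.inl 0)
        simp only [Matrix.mul_apply, Fintype.sum_sum_type, Fin.sum_univ_one, ha, hb,
          zero_mul, add_zero, zero_add, Matrix.one_apply_eq] at h4
        exact one_ne_zero h4.symm
      · right
        have e12 := congrFun (congrFun hmat (Sum.inl 0)) (Sum.inr 0)
        simp only [Matrix.diagonal_mul, Matrix.mul_diagonal, Sum.elim_inl, Sum.elim_inr] at e12
        have h3 : ((w' : ZMod p) + ((w⁻¹ : (ZMod p)ˣ) : ZMod p)) * gm (Sum.inl 0) (Sum.inr 0)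
            = 0 := by linear_combination -e12
        rcases mul_eq_zero.mp h3 with h | h
        · refine Units.ext ?_
          rw [Units.val_neg]
          linear_combination h
        · exact absurd h hb
    · left
      have e11 := congrFun (congrFun hmat (Sum.inl 0)) (Sum.inl 0)
      simp only [Matrix.diagonal_mul, Matrix.mul_diagonal, Sum.elim_inl, Sum.elim_inr] at e11
      have h3 : ((w' : ZMod p) - (w : ZMod p)) * gm (Sum.inl 0) (Sum.inl 0) = 0 := by
        linear_combination e11
      rcases mul_eq_zero.mp h3 with h | h
      · exact Units.ext (by linear_combination h)
      · exact absurd h ha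
  · rintro (rfl | rfl)
    · have hWW : W' = W := Subtype.ext (hW'.trans hW.symm)
      subst hWW
      exact ⟨1, by simp⟩
    · refine ⟨SymplecticGroup.symJ (Fin 1) (ZMod p), eq_mul_inv_of_mul_eq ?_⟩
      apply Subtype.ext
      rw [Submonoid.coe_mul, Submonoid.coe_mul, hφval, SymplecticGroup.coe_J, hDJD, hW, hW']
      have hval : ((-w⁻¹ : (ZMod p)ˣ) : ZMod p) = -((w⁻¹ : (ZMod p)ˣ) : ZMod p) :=
        Units.val_neg _
      have hval2 : (((-w⁻¹)⁻¹ : (ZMod p)ˣ) : ZMod p) = -((w : (ZMod p)ˣ) : ZMod p) := by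
        rw [inv_neg, inv_inv, Units.val_neg]
      rw [hJ]
      ext i j
      rcases i with i | i <;> rcases j with j | j <;>
        simp only [Matrix.mul_neg, Matrix.neg_apply, Matrix.diagonal_mul, Matrix.mul_diagonal,
          Sum.elim_inl, Sum.elim_inr, Matrix.J, Matrix.fromBlocks_apply₁₁,
          Matrix.fromBlocks_apply₁₂, Matrix.fromBlocks_apply₂₁, Matrix.fromBlocks_apply₂₂,
          Matrix.zero_apply, Matrix.one_apply, Matrix.neg_apply, hval, hval2,
          eq_iff_true_of_subsingleton, if_true, Matrix.of_apply] <;>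
        ring
end

section
/- Let p be an odd prime and let φ_p be the automorphism of Sp(2, ZMod p) given by φ_p(M) = D M D⁻¹ with D = diag(1, −1) (so (φ_p(M))_{ij} = (−1)^{i+j} M_{ij}). Then the number of Reidemeister classes of φ_p satisfies R(φ_p) ≥ (p − 3)/2. -/
open Matrix

section Aux

variable (p : ℕ) [Fact p.Prime]

/-- test matrix -/
private def Dm : Matrix (Fin 1 ⊕ Fin 1) (Fin 1 ⊕ Fin 1) (ZMod p) :=
  Matrix.diagonal (Sum.elim (fun _ => 1) (fun _ => -1))

private lemma DD : Dm p * Dm p = 1 := by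
  rw [Dm, Matrix.diagonal_mul_diagonal]
  ext i j
  rcases i with i | i <;> rcases j with j | j <;>
    simp [Matrix.diagonal, Matrix.one_apply, Fin.eq_zero i, Fin.eq_zero j]

private def Mt (t : ZMod p) : Matrix (Fin 1 ⊕ Fin 1) (Fin 1 ⊕ Fin 1) (ZMod p) :=
  Matrix.of fun i j =>
    match i, j with
    | .inl _, .inl _ => t
    | .inl _, .inr _ => -1
    | .inr _, .inl _ => 1
    | .inr _, .inr _ => 0

private lemma Mt_mem (t : ZMod p) : Mt p t ∈ Matrix.symplecticGroup (Fin 1) (ZMod p) := by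
  rw [SymplecticGroup.mem_iff]
  ext i j
  rcases i with i | i <;> rcases j with j | j <;>
    simp [Matrix.mul_apply, Fintype.sum_sum_type, Matrix.J, Matrix.fromBlocks, Mt,
      Fin.sum_univ_one, Matrix.one_apply, Fin.eq_zero i, Fin.eq_zero j]

private lemma Mt_trace (t : ZMod p) : Matrix.trace (Mt p t * Dm p) = t := by
  simp [Matrix.trace, Fintype.sum_sum_type, Fin.sum_univ_one, Matrix.mul_apply, Mt, Dm,
    Matrix.diagonal]

end Aux

theorem sp2_zmod_reidemeister_lower_bound
    (p : ℕ) [Fact p.Prime] (hp : p ≠ 2)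
    (φ : Matrix.symplecticGroup (Fin 1) (ZMod p) ≃*
      Matrix.symplecticGroup (Fin 1) (ZMod p))
    (hφ : ∀ M : Matrix.symplecticGroup (Fin 1) (ZMod p),
        (↑(φ M) : Matrix (Fin 1 ⊕ Fin 1) (Fin 1 ⊕ Fin 1) (ZMod p)) =
          Matrix.diagonal (Sum.elim (fun _ => 1) (fun _ => -1)) *
            (↑M : Matrix (Fin 1 ⊕ Fin 1) (Fin 1 ⊕ Fin 1) (ZMod p)) *
            (Matrix.diagonal (Sum.elim (fun _ => 1) (fun _ => -1)) :
              Matrix (Fin 1 ⊕ Fin 1) (Fin 1 ⊕ Fin 1) (ZMod p))⁻¹) :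
    (((p - 3) / 2 : ℕ) : Cardinal) ≤ ReidemeisterNumber φ.toMonoidHom := by
  set D := Dm p with hDdef
  have hDinv : D⁻¹ = D := Matrix.inv_eq_right_inv (DD p)
  -- the trace invariant descends to the quotient
  have hinv : ∀ x y : Matrix.symplecticGroup (Fin 1) (ZMod p),
      (twistedConjSetoid φ.toMonoidHom).r x y →
      Matrix.trace ((x : Matrix (Fin 1 ⊕ Fin 1) (Fin 1 ⊕ Fin 1) (ZMod p)) * D) =
      Matrix.trace ((y : Matrix (Fin 1 ⊕ Fin 1) (Fin 1 ⊕ Fin 1) (ZMod p)) * D) := by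
    rintro x y ⟨g, rfl⟩
    have hcoe : ((g * x * (φ.toMonoidHom g)⁻¹ : Matrix.symplecticGroup (Fin 1) (ZMod p)) :
        Matrix (Fin 1 ⊕ Fin 1) (Fin 1 ⊕ Fin 1) (ZMod p)) =
        (g : Matrix (Fin 1 ⊕ Fin 1) (Fin 1 ⊕ Fin 1) (ZMod p)) * x *
          ((φ g : Matrix.symplecticGroup (Fin 1) (ZMod p)) :
            Matrix (Fin 1 ⊕ Fin 1) (Fin 1 ⊕ Fin 1) (ZMod p))⁻¹ := by
      push_cast [SymplecticGroup.coe_inv']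
      rfl
    have hφg : ((φ g : Matrix.symplecticGroup (Fin 1) (ZMod p)) :
        Matrix (Fin 1 ⊕ Fin 1) (Fin 1 ⊕ Fin 1) (ZMod p))⁻¹ =
        D * ((g⁻¹ : Matrix.symplecticGroup (Fin 1) (ZMod p)) :
          Matrix (Fin 1 ⊕ Fin 1) (Fin 1 ⊕ Fin 1) (ZMod p)) * D := by
      have hDeq : Matrix.diagonal (Sum.elim (fun _ => (1:ZMod p)) (fun _ => -1)) = D := rfl
      rw [hφ g, hDeq, hDinv, Matrix.mul_inv_rev, Matrix.mul_inv_rev, hDinv,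
        ← SymplecticGroup.coe_inv', Matrix.mul_assoc]
    rw [hcoe, hφg]
    have hgg : ((g⁻¹ : Matrix.symplecticGroup (Fin 1) (ZMod p)) :
        Matrix (Fin 1 ⊕ Fin 1) (Fin 1 ⊕ Fin 1) (ZMod p)) *
        (g : Matrix (Fin 1 ⊕ Fin 1) (Fin 1 ⊕ Fin 1) (ZMod p)) = 1 := by
      rw [← Submonoid.coe_mul, inv_mul_cancel, Submonoid.coe_one]
    calc Matrix.trace ((x : Matrix (Fin 1 ⊕ Fin 1) (Fin 1 ⊕ Fin 1) (ZMod p)) * D)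
        = Matrix.trace (((x : Matrix (Fin 1 ⊕ Fin 1) (Fin 1 ⊕ Fin 1) (ZMod p)) * D *
          ((g⁻¹ : Matrix.symplecticGroup (Fin 1) (ZMod p)) :
          Matrix (Fin 1 ⊕ Fin 1) (Fin 1 ⊕ Fin 1) (ZMod p))) *
          (g : Matrix (Fin 1 ⊕ Fin 1) (Fin 1 ⊕ Fin 1) (ZMod p))) := by
          rw [Matrix.mul_assoc, hgg, Matrix.mul_one]
      _ = _ := by
          rw [Matrix.trace_mul_comm]
          have : (g : Matrix (Fin 1 ⊕ Fin 1) (Fin 1 ⊕ Fin 1) (ZMod p)) *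
              ((x : Matrix (Fin 1 ⊕ Fin 1) (Fin 1 ⊕ Fin 1) (ZMod p)) * D *
              ((g⁻¹ : Matrix.symplecticGroup (Fin 1) (ZMod p)) :
              Matrix (Fin 1 ⊕ Fin 1) (Fin 1 ⊕ Fin 1) (ZMod p))) =
              (g : Matrix (Fin 1 ⊕ Fin 1) (Fin 1 ⊕ Fin 1) (ZMod p)) *
              (x : Matrix (Fin 1 ⊕ Fin 1) (Fin 1 ⊕ Fin 1) (ZMod p)) *
              (D * ((g⁻¹ : Matrix.symplecticGroup (Fin 1) (ZMod p)) :
              Matrix (Fin 1 ⊕ Fin 1) (Fin 1 ⊕ Fin 1) (ZMod p)) * D) * D := by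
            have hD2 := DD p
            simp only [Matrix.mul_assoc]
            rw [hD2, Matrix.mul_one]
          rw [this]
  let f : Quotient (twistedConjSetoid φ.toMonoidHom) → ZMod p :=
    Quotient.lift
      (fun M : Matrix.symplecticGroup (Fin 1) (ZMod p) =>
        Matrix.trace ((M : Matrix (Fin 1 ⊕ Fin 1) (Fin 1 ⊕ Fin 1) (ZMod p)) * D))
      hinv
  have hsurj : Function.Surjective f := by
    intro t
    exact ⟨Quotient.mk _ ⟨Mt p t, Mt_mem p t⟩, Mt_trace p t⟩
  have h1 : (Cardinal.mk (ZMod p)) ≤ ReidemeisterNumber φ.toMonoidHom :=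
    Cardinal.mk_le_of_surjective hsurj
  have h2 : Cardinal.mk (ZMod p) = p := by
    rw [Cardinal.mk_fintype, ZMod.card]
  refine le_trans ?_ h1
  rw [h2]
  exact_mod_cast Nat.le_of_lt_succ (Nat.lt_succ_of_le (le_trans (Nat.div_le_self _ _)
    (Nat.sub_le _ _)))
end

section
/- Let G be a group, m ≥ 1, and φ an automorphism of G with φ^m = id. Let ψ : Multiplicative (ZMod m) → Aut(G) be the homomorphism sending the generator (the class of 1) to φ, and form the semidirect product G_φ = G ⋊_ψ Multiplicative (ZMod m); write t for the element of G_φ corresponding to the generator of Multiplicative (ZMod m). Then two elements x, y ∈ G are φ-conjugate if and only if the elements x·t and y·t of G_φ are conjugate in the usual sense in G_φ. Consequently, the map sending the Reidemeister class of x to the conjugacy class of x·t is a bijection between the Reidemeister classes of φ and the conjugacy classes of G_φ contained in the coset G·t; in particular R(φ) equals the number of conjugacy classes of G_φ meeting the coset G·t. -/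
theorem twisted_conjugacy_iff_conjugacy_in_semidirect_product
    {G : Type*} [Group G] (m : ℕ) (hm : 1 ≤ m) (φ : MulAut G) (hφ : φ ^ m = 1)
    (ψ : Multiplicative (ZMod m) →* MulAut G)
    (hψ : ψ (Multiplicative.ofAdd (1 : ZMod m)) = φ) :
    (∀ x y : G,
        (twistedConjSetoid φ.toMonoidHom).r x y ↔
          IsConj
            (SemidirectProduct.inl x *
              SemidirectProduct.inr (Multiplicative.ofAdd (1 : ZMod m)) :
                G ⋊[ψ] Multiplicative (ZMod m))
            (SemidirectProduct.inl y *
              SemidirectProduct.inr (Multiplicative.ofAdd (1 : ZMod m)))) ∧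
    (∃ F : Quotient (twistedConjSetoid φ.toMonoidHom) ≃
          {c : ConjClasses (G ⋊[ψ] Multiplicative (ZMod m)) //
            ∃ x : G, c = ConjClasses.mk
              (SemidirectProduct.inl x *
                SemidirectProduct.inr (Multiplicative.ofAdd (1 : ZMod m)))},
        ∀ x : G, (F (Quotient.mk (twistedConjSetoid φ.toMonoidHom) x)).val =
          ConjClasses.mk
            (SemidirectProduct.inl x *
              SemidirectProduct.inr (Multiplicative.ofAdd (1 : ZMod m)))) ∧
    ReidemeisterNumber φ.toMonoidHom =
      Cardinal.mk {c : ConjClasses (G ⋊[ψ] Multiplicative (ZMod m)) //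
        ∃ x : G, c = ConjClasses.mk
          (SemidirectProduct.inl x *
            SemidirectProduct.inr (Multiplicative.ofAdd (1 : ZMod m)))} := by
  haveI : NeZero m := ⟨by omega⟩
  set S := twistedConjSetoid φ.toMonoidHom with hS
  -- x is twisted-conjugate to (φ ^ k) x
  have hpow : ∀ (k : ℕ) (x : G), S.r x ((φ ^ k) x) := by
    intro k x
    induction k with
    | zero => exact ⟨1, by simp⟩
    | succ k ih =>
      refine S.trans ih ⟨((φ ^ k) x)⁻¹, ?_⟩
      simp [pow_succ', MulAut.mul_apply]
  -- ψ of any element is a power of φ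
  have hψpow : ∀ h : Multiplicative (ZMod m), ψ h = φ ^ (h.toAdd.val) := by
    intro h
    have : h = (Multiplicative.ofAdd (1 : ZMod m)) ^ (h.toAdd.val) := by
      apply Multiplicative.toAdd.injective
      simp [ZMod.natCast_val, ZMod.cast_id]
    conv_lhs => rw [this]
    rw [map_pow, hψ]
  have main : ∀ x y : G, S.r x y ↔
      IsConj
        (SemidirectProduct.inl x *
          SemidirectProduct.inr (Multiplicative.ofAdd (1 : ZMod m)) :
            G ⋊[ψ] Multiplicative (ZMod m))
        (SemidirectProduct.inl y *
          SemidirectProduct.inr (Multiplicative.ofAdd (1 : ZMod m))) := by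
    intro x y
    constructor
    · rintro ⟨g, rfl⟩
      rw [isConj_iff]
      refine ⟨SemidirectProduct.inl g, ?_⟩
      ext
      · simp [SemidirectProduct.mul_left, SemidirectProduct.inv_left, hψ, mul_assoc]
      · simp [SemidirectProduct.mul_right, SemidirectProduct.inv_right]
    · rw [isConj_iff]
      rintro ⟨c, hc⟩
      have hleft := congrArg SemidirectProduct.left hc
      simp [SemidirectProduct.mul_left, SemidirectProduct.inv_left, mul_assoc,
        SemidirectProduct.mul_right, map_mul] at hleft
      have hcomm : (ψ c.right) ((φ : MulAut G) ((ψ c.right)⁻¹ c.left)) = φ c.left := by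
        have h1 : ψ c.right * φ * (ψ c.right)⁻¹ = φ := by
          rw [hψpow c.right, ← (Commute.self_pow φ _).eq, mul_inv_cancel_right]
        calc (ψ c.right) ((φ : MulAut G) ((ψ c.right)⁻¹ c.left))
            = (ψ c.right * φ * (ψ c.right)⁻¹) c.left := rfl
          _ = φ c.left := by rw [h1]
      rw [hψ, ← MulAut.inv_def, hcomm, hψpow c.right] at hleft
      refine S.trans (hpow (c.right.toAdd.val) x) ⟨c.left, ?_⟩
      rw [← hleft]
      simp [mul_assoc]
  have FF : { F : Quotient S ≃
        {c : ConjClasses (G ⋊[ψ] Multiplicative (ZMod m)) //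
          ∃ x : G, c = ConjClasses.mk
            (SemidirectProduct.inl x *
              SemidirectProduct.inr (Multiplicative.ofAdd (1 : ZMod m)))} //
      ∀ x : G, (F (Quotient.mk S x)).val =
        ConjClasses.mk
          (SemidirectProduct.inl x *
            SemidirectProduct.inr (Multiplicative.ofAdd (1 : ZMod m))) } := by
    refine ⟨Equiv.ofBijective
      (Quotient.lift (fun x : G => (⟨ConjClasses.mk
          (SemidirectProduct.inl x *
            SemidirectProduct.inr (Multiplicative.ofAdd (1 : ZMod m))), x, rfl⟩ :
          {c : ConjClasses (G ⋊[ψ] Multiplicative (ZMod m)) //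
            ∃ x : G, c = ConjClasses.mk
              (SemidirectProduct.inl x *
                SemidirectProduct.inr (Multiplicative.ofAdd (1 : ZMod m)))}))
        (fun a b hab => Subtype.ext (ConjClasses.mk_eq_mk_iff_isConj.2 ((main a b).1 hab))))
      ⟨?_, ?_⟩, fun x => rfl⟩
    · intro a b
      induction a using Quotient.ind
      induction b using Quotient.ind
      intro h
      exact Quotient.sound ((main _ _).2
        (ConjClasses.mk_eq_mk_iff_isConj.1 (congrArg Subtype.val h)))
    · rintro ⟨c, x, rfl⟩
      exact ⟨Quotient.mk S x, rfl⟩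
  exact ⟨main, ⟨FF.1, FF.2⟩, Cardinal.mk_congr FF.1⟩
end
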